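/- If Γ is a nonzero topologically invariant mean on PM_Ψ(G), then the restriction of Γ to the subspace UCB_Ψ(Ĝ) is a nonzero element of UCB_Ψ(Ĝ)*. -/

import Mathlib

open MeasureTheory Filter Topology NormedSpace
open scoped ENNReal ZeroAtInfty

noncomputable section

/-! ### Young functions and the Δ₂ and MA conditions -/

/-- A (real-valued, continuous) Young function. -/
structure IsYoungFunction (Φ : ℝ → ℝ) : Prop where
  even : ∀ x, Φ (-x) = Φ x
  convexOn : ConvexOn ℝ Set.univ Φ
  nonneg : ∀ x, 0 ≤ Φ x
  map_zero : Φ 0 = 0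
  continuous : Continuous Φ
  tendsto_atTop : Tendsto Φ atTop atTop

/-- `(Φ, Ψ)` is a complementary pair of Young functions:
`Ψ y = sup { x * |y| - Φ x : x ≥ 0 }`. -/
def IsComplementaryYoungPair (Φ Ψ : ℝ → ℝ) : Prop :=
  IsYoungFunction Φ ∧ IsYoungFunction Ψ ∧
    ∀ y, Ψ y = sSup {z | ∃ x ≥ (0 : ℝ), z = x * |y| - Φ x}

/-- The Δ₂-condition for a Young function. -/
def HasDeltaTwo (Φ : ℝ → ℝ) : Prop :=
  ∃ k > (0 : ℝ), ∃ x₀ ≥ (0 : ℝ), ∀ x ≥ x₀, Φ (2 * x) ≤ k * Φ x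

/-- The Milnes–Akimonič (MA) condition for a Young function. -/
def HasMACondition (Φ : ℝ → ℝ) : Prop :=
  ∀ ε > (0 : ℝ), ∃ β > (1 : ℝ), ∃ x₀ ≥ (0 : ℝ), ∀ x ≥ x₀,
    β * deriv Φ x ≤ deriv Φ ((1 + ε) * x)

/-! ### Orlicz spaces -/

section Orlicz

variable {G : Type*} [MeasurableSpace G]

/-- Membership in the Orlicz space `L^Φ(G)`. -/
def MemOrlicz (Φ : ℝ → ℝ) (μ : Measure G) (f : G → ℂ) : Prop :=
  AEStronglyMeasurable f μ ∧ ∃ β > (0 : ℝ), ∫⁻ x, ENNReal.ofReal (Φ (β * ‖f x‖)) ∂μ < ⊤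

/-- The Luxemburg (gauge) norm `N_Φ(f)` on `L^Φ(G)`. -/
def luxemburgNorm (Φ : ℝ → ℝ) (μ : Measure G) (f : G → ℂ) : ℝ :=
  sInf {k | 0 < k ∧ ∫⁻ x, ENNReal.ofReal (Φ (‖f x‖ / k)) ∂μ ≤ 1}

/-- The Orlicz norm `‖f‖_Φ`, where `Ψ` is the Young function complementary to `Φ`. -/
def orliczNorm (Φ Ψ : ℝ → ℝ) (μ : Measure G) (f : G → ℂ) : ℝ :=
  sSup {r | ∃ g : G → ℂ, (∫⁻ x, ENNReal.ofReal (Ψ (‖g x‖)) ∂μ ≤ 1) ∧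
    r = ∫ x, ‖f x‖ * ‖g x‖ ∂μ}

end Orlicz

/-! ### The Orlicz Figà-Talamanca Herz algebra `A_Φ(G)` -/

section Aphi

variable {G : Type*} [MeasurableSpace G] [Group G] [TopologicalSpace G]

/-- `f, g` give an admissible representation `u = ∑' n, f n ⋆ (g n)ᵛ` of `u` for `A_Φ(G)`,
where `ǧ x = g x⁻¹`, so that `(f ⋆ ǧ) x = ∫ y, f y * g (x⁻¹ * y)`. -/
def IsAphiDecomposition (μ : Measure G) (Φ Ψ : ℝ → ℝ) (u : G → ℂ)
    (f g : ℕ → G → ℂ) : Prop :=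
  (∀ n, MemOrlicz Φ μ (f n)) ∧ (∀ n, MemOrlicz Ψ μ (g n)) ∧
    Summable (fun n => luxemburgNorm Φ μ (f n) * orliczNorm Ψ Φ μ (g n)) ∧
    ∀ x, u x = ∑' n, ∫ y, f n y * g n (x⁻¹ * y) ∂μ

/-- Membership in `A_Φ(G)` for an element of `C₀(G, ℂ)`. -/
def MemAphi (μ : Measure G) (Φ Ψ : ℝ → ℝ) (u : C₀(G, ℂ)) : Prop :=
  ∃ f g, IsAphiDecomposition μ Φ Ψ (⇑u) f g

/-- The norm of `A_Φ(G)`. -/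
def aphiNorm (μ : Measure G) (Φ Ψ : ℝ → ℝ) (u : C₀(G, ℂ)) : ℝ :=
  sInf {r | ∃ f g, IsAphiDecomposition μ Φ Ψ (⇑u) f g ∧
    r = ∑' n, luxemburgNorm Φ μ (f n) * orliczNorm Ψ Φ μ (g n)}

/-- `A`, together with the embedding `ι : A → C₀(G, ℂ)`, *is* the Orlicz
Figà-Talamanca Herz algebra `A_Φ(G)`: a commutative Banach algebra of
`C₀`-functions (with pointwise operations) whose members are exactly the functions
admitting an `A_Φ`-decomposition, and carrying the `A_Φ(G)`-norm. -/
structure IsOrliczFigaTalamancaHerzAlgebra (μ : Measure G) (Φ Ψ : ℝ → ℝ)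
    (A : Type*) [NonUnitalNormedCommRing A] [NormedSpace ℂ A]
    (ι : A → C₀(G, ℂ)) : Prop where
  injective : Function.Injective ι
  map_add : ∀ a b, ι (a + b) = ι a + ι b
  map_smul : ∀ (c : ℂ) (a), ι (c • a) = c • ι a
  map_mul : ∀ a b, ι (a * b) = ι a * ι b
  mem_range_iff : ∀ u, (∃ a, ι a = u) ↔ MemAphi μ Φ Ψ u
  norm_eq : ∀ a, ‖a‖ = aphiNorm μ Φ Ψ (ι a)

end Aphi

/-! ### The first Arens product on the double dual of a Banach algebra -/

section Arens

variable (A : Type*) [NonUnitalNormedRing A] [NormedSpace ℂ A]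
  [SMulCommClass ℂ A A] [IsScalarTower ℂ A A]

open ContinuousLinearMap in
/-- The module action `u • T` of `A` on its dual: `⟨u • T, v⟩ = ⟨T, u * v⟩`. -/
def dotAct (u : A) (T : StrongDual ℂ A) : StrongDual ℂ A :=
  T.comp (ContinuousLinearMap.mul ℂ A u)

open ContinuousLinearMap in
/-- The action `dotAct` as a continuous bilinear map, `(T, u) ↦ u • T`. -/
def dotActR : StrongDual ℂ A →L[ℂ] A →L[ℂ] StrongDual ℂ A :=
  ((compL ℂ A (A →L[ℂ] A) (StrongDual ℂ A)).flip (ContinuousLinearMap.mul ℂ A)).comp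
    (compL ℂ A A ℂ)

instance instSeminormedCLM3 {E F G : Type*} [SeminormedAddCommGroup E] [NormedSpace ℂ E]
    [SeminormedAddCommGroup F] [NormedSpace ℂ F] [SeminormedAddCommGroup G] [NormedSpace ℂ G] :
    SeminormedAddCommGroup (E →L[ℂ] F →L[ℂ] G) :=
  ContinuousLinearMap.toSeminormedAddCommGroup

instance instNormedSpaceCLM3 {E F G : Type*} [SeminormedAddCommGroup E] [NormedSpace ℂ E]
    [SeminormedAddCommGroup F] [NormedSpace ℂ F] [SeminormedAddCommGroup G] [NormedSpace ℂ G] :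
    NormedSpace ℂ (E →L[ℂ] F →L[ℂ] G) :=
  ContinuousLinearMap.toNormedSpace

open ContinuousLinearMap in
/-- The operation `Γ ⊙ T` on `A** × A*`: `⟨Γ ⊙ T, u⟩ = ⟨Γ, u • T⟩`. -/
def arensOdot : StrongDual ℂ (StrongDual ℂ A) →L[ℂ] StrongDual ℂ A →L[ℂ] StrongDual ℂ A := by
  refine ContinuousLinearMap.comp ?_ (compL ℂ A (StrongDual ℂ A) ℂ)
  exact (compL ℂ (StrongDual ℂ A) (A →L[ℂ] StrongDual ℂ A) (StrongDual ℂ A)).flip (𝕜 := ℂ)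
    (𝕜₂ := ℂ) (𝕜₃ := ℂ) (σ₁₃ := RingHom.id ℂ) (σ₂₃ := RingHom.id ℂ) (dotActR A)

/-- The first Arens product `Γ' □ Γ` on the double dual `A**`:
`⟨Γ' □ Γ, T⟩ = ⟨Γ', Γ ⊙ T⟩`. -/
def arens (Γ' Γ : StrongDual ℂ (StrongDual ℂ A)) : StrongDual ℂ (StrongDual ℂ A) :=
  Γ'.comp (arensOdot A Γ)

/-- The space `UCB_Ψ(Ĝ) = A* ⬝ A`: the norm closure in `A*` of the linear span of
`{u • T : u ∈ A, T ∈ A*}`. -/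
def UCBSubmodule : Submodule ℂ (StrongDual ℂ A) :=
  (Submodule.span ℂ {T | ∃ (u : A) (S : StrongDual ℂ A), T = dotAct A u S}).topologicalClosure

variable {A} in
theorem dotAct_mem_UCBSubmodule (u : A) (S : StrongDual ℂ A) :
    dotAct A u S ∈ UCBSubmodule A :=
  Submodule.le_topologicalClosure _ (Submodule.subset_span ⟨u, S, rfl⟩)

variable {A} in
/-- The restriction of `Γ ∈ A**` to the subspace `UCB_Ψ(Ĝ) ⊆ A*`. -/
def restrictToUCB (Γ : StrongDual ℂ (StrongDual ℂ A)) : StrongDual ℂ ↥(UCBSubmodule A) :=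
  Γ.comp (UCBSubmodule A).subtypeL

end Arens

/-! ### Dual maps, supports, radicals, topological centres, amenability -/

/-- The adjoint (dual map) of a continuous linear map. -/
def dualMapL {E F : Type*} [NormedAddCommGroup E] [NormedSpace ℂ E]
    [NormedAddCommGroup F] [NormedSpace ℂ F] (m : E →L[ℂ] F) :
    StrongDual ℂ F →L[ℂ] StrongDual ℂ E :=
  (ContinuousLinearMap.compL ℂ E F ℂ).flip m

section Support

variable {G : Type*} [TopologicalSpace G] {A : Type*} [NonUnitalNormedCommRing A]
  [NormedSpace ℂ A]

/-- The support of a functional `T ∈ A* = PM_Ψ(G)`: `x ∉ supp T` iff there is a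
neighbourhood `V` of `x` such that `⟨T, v⟩ = 0` for all `v ∈ A` supported in `V`. -/
def pmSupport (ι : A → C₀(G, ℂ)) (T : StrongDual ℂ A) : Set G :=
  {x | ∀ V ∈ nhds x, ∃ a : A, tsupport ⇑(ι a) ⊆ V ∧ T a ≠ 0}

end Support

/-- `z` is left quasi-regular with respect to the multiplication `mul`:
there is `b` with `b + z + b * z = 0` (i.e. `1 + z` has a left inverse `1 + b`
in the unitization). -/
def IsLeftQuasiRegularWith {R : Type*} [AddCommGroup R] (mul : R → R → R) (z : R) : Prop :=
  ∃ b, b + z + mul b z = 0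

/-- Membership in the Jacobson radical of the (possibly non-unital) ring `(R, +, mul)`:
every element of the right ideal generated by `a` is left quasi-regular. -/
def MemJacobsonRadicalWith {R : Type*} [AddCommGroup R] (mul : R → R → R) (a : R) : Prop :=
  ∀ (x : R) (n : ℤ), IsLeftQuasiRegularWith mul (mul a x + n • a)

/-- The (possibly non-unital) ring `(R, +, mul)` is semi-simple: its Jacobson radical
is `{0}`. -/
def IsSemisimpleWith {R : Type*} [AddCommGroup R] (mul : R → R → R) : Prop :=
  ∀ a, MemJacobsonRadicalWith mul a → a = 0

/-- The topological centre of the dual of `E` with respect to a product `mul` on the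
dual: the set of all `m` such that `m' ↦ mul m m'` is `w*`-`w*`-continuous. -/
def topCenterWith {E : Type*} [NormedAddCommGroup E] [NormedSpace ℂ E]
    (mul : StrongDual ℂ E → StrongDual ℂ E → StrongDual ℂ E) : Set (StrongDual ℂ E) :=
  {m | Continuous fun m' : WeakDual ℂ E =>
    StrongDual.toWeakDual (mul m (WeakDual.toStrongDual m'))}

section Amenable

variable {G : Type*} [MeasurableSpace G] [Group G]

/-- Amenability of `G`: there is a positive, norm-one, left translation invariant
linear functional on `L^∞(G)`. -/
def HasLeftInvariantMean (μ : Measure G) : Prop :=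
  ∃ Λ : Lp ℝ ⊤ μ →L[ℝ] ℝ, ‖Λ‖ = 1 ∧
    (∀ f : Lp ℝ ⊤ μ, (∀ᵐ y ∂μ, 0 ≤ f y) → 0 ≤ Λ f) ∧
    ∀ (x : G) (f g : Lp ℝ ⊤ μ), (∀ᵐ y ∂μ, g y = f (x⁻¹ * y)) → Λ g = Λ f

end Amenable

/-- A normed space is weakly sequentially complete if every weakly Cauchy sequence
converges weakly. -/
def WeaklySequentiallyComplete (E : Type*) [NormedAddCommGroup E] [NormedSpace ℂ E] : Prop :=
  ∀ u : ℕ → E, (∀ T : StrongDual ℂ E, CauchySeq fun n => T (u n)) →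
    ∃ x : E, ∀ T : StrongDual ℂ E, Tendsto (fun n => T (u n)) atTop (nhds (T x))

section PF

variable {G : Type*} [MeasurableSpace G] [Group G] [TopologicalSpace G]

/-- The algebra of `Ψ`-pseudofunctions `PF_Ψ(G)`, realised inside `A_Φ(G)* = PM_Ψ(G)`:
the norm closure of the span of the functionals induced by `L¹(G)`-functions. -/
def PFSubmodule (μ : Measure G) {A : Type*} [NonUnitalNormedCommRing A]
    [NormedSpace ℂ A] (ι : A → C₀(G, ℂ)) : Submodule ℂ (StrongDual ℂ A) :=
  (Submodule.span ℂ {T | ∃ f : G → ℂ, Integrable f μ ∧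
    ∀ a, T a = ∫ x, f x * ι a x ∂μ}).topologicalClosure

end PF


section TopologicallyInvariant

variable {A : Type*} [NonUnitalNormedRing A] [NormedSpace ℂ A] [SMulCommClass ℂ A A]
  [IsScalarTower ℂ A A]

theorem restrictToUCB_apply_dotAct (Γ : StrongDual ℂ (StrongDual ℂ A)) (u : A)
    (T : StrongDual ℂ A) :
    restrictToUCB Γ ⟨dotAct A u T, dotAct_mem_UCBSubmodule u T⟩ = Γ (dotAct A u T) :=
  rfl

theorem restrictToUCB_ne_zero_of_apply_dotAct_eq_mul {Γ : StrongDual ℂ (StrongDual ℂ A)}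
    {φ : A → ℂ} (hφ : φ ≠ 0) (hΓ : ∀ u T, Γ (dotAct A u T) = φ u * Γ T)
    {T : StrongDual ℂ A} (hT : Γ T ≠ 0) : restrictToUCB Γ ≠ 0 := by
  obtain ⟨u, hu⟩ : ∃ u, φ u ≠ 0 := Function.ne_iff.mp hφ
  refine DFunLike.ne_iff.mpr ⟨⟨dotAct A u T, dotAct_mem_UCBSubmodule u T⟩, ?_⟩
  rw [restrictToUCB_apply_dotAct, hΓ]
  exact mul_ne_zero hu hT

end TopologicallyInvariant

variable {G : Type*} [Group G] [TopologicalSpace G] [IsTopologicalGroup G]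
  [LocallyCompactSpace G] [MeasurableSpace G] [BorelSpace G]

theorem restriction_of_tim_ne_zero_general
    (A : Type*) [NonUnitalNormedCommRing A] [NormedSpace ℂ A] [SMulCommClass ℂ A A]
    [IsScalarTower ℂ A A] (ι : A → C₀(G, ℂ))
    (lamE : StrongDual ℂ A) (hlamE : ∀ a : A, lamE a = ι a 1)
    (Γ : StrongDual ℂ (StrongDual ℂ A))
    (hΓ_one : Γ lamE = 1)
    (hΓ_tim : ∀ (u : A) (T : StrongDual ℂ A), Γ (dotAct A u T) = ι u 1 * Γ T) :
    restrictToUCB Γ ≠ 0 := by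
  have hΓ_lamE : Γ lamE ≠ 0 := by simp [hΓ_one]
  have hlamE_ne : lamE ≠ 0 := ne_of_apply_ne Γ (by rwa [map_zero])
  exact restrictToUCB_ne_zero_of_apply_dotAct_eq_mul
    (fun h => hlamE_ne (ContinuousLinearMap.ext (congrFun h)))
    (fun u T => by rw [hΓ_tim, hlamE]) hΓ_lamE

/-- If `Γ` is a nonzero topologically invariant mean on `PM_Ψ(G)`,
then the restriction of `Γ` to the subspace `UCB_Ψ(Ĝ)` is a nonzero element of
`UCB_Ψ(Ĝ)*`.  Here `lamE = λ_Ψ(e)` is evaluation at the identity of `G`. -/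
theorem restriction_of_tim_ne_zero
    (μ : Measure G) [μ.IsHaarMeasure] (Φ Ψ : ℝ → ℝ)
    (hpair : IsComplementaryYoungPair Φ Ψ) (hΦΔ : HasDeltaTwo Φ) (hΨΔ : HasDeltaTwo Ψ)
    (A : Type*) [NonUnitalNormedCommRing A] [NormedSpace ℂ A] [SMulCommClass ℂ A A]
    [IsScalarTower ℂ A A] [CompleteSpace A] (ι : A → C₀(G, ℂ))
    (hA : IsOrliczFigaTalamancaHerzAlgebra μ Φ Ψ A ι)
    (lamE : StrongDual ℂ A) (hlamE : ∀ a : A, lamE a = ι a 1)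
    (Γ : StrongDual ℂ (StrongDual ℂ A)) (hΓ_ne : Γ ≠ 0)
    (hΓ_norm : ‖Γ‖ = 1) (hΓ_one : Γ lamE = 1)
    (hΓ_tim : ∀ (u : A) (T : StrongDual ℂ A), Γ (dotAct A u T) = ι u 1 * Γ T) :
    restrictToUCB Γ ≠ 0 :=
  restriction_of_tim_ne_zero_general A ι lamE hlamE Γ hΓ_one hΓ_tim

end
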